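/- Suppose ℐ is a valuative closed subspace of 𝒢_K. Then there exists a unique minimal valuation v_ℐ of K (with respect to coarsening) such that ℐ ⊆ I_{v_ℐ}. A valuation v equals v_ℐ if and only if: (1) ℐ ⊆ I_v, equivalently U_v ⊆ ℐ^⊥; and (2) the subgroup v(ℐ^⊥) of the value group vK contains no nontrivial convex subgroups. -/

import Mathlib

/- Common definitions: Milnor K-theory of fields (possibly modulo a subgroup of `Kˣ`),
its rationalization, the dual space `𝒢_K` with the relation of alternating pairs,
and valuation-theoretic subspaces, following the paper. -/

set_option synthInstance.maxHeartbeats 400000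
set_option maxHeartbeats 1000000

open scoped TensorProduct

namespace Paper

section Milnor

variable (K : Type) [Field K]

/-- The Steinberg relation together with the relation killing a subgroup `T ≤ Kˣ`; used to
present `K^M_*(K|T) := K^M_*(K)/⟨T⟩` as a quotient of the tensor algebra of the
`ℤ`-module `Kˣ`. -/
inductive MilnorRel (T : Subgroup Kˣ) :
    TensorAlgebra ℤ (Additive Kˣ) → TensorAlgebra ℤ (Additive Kˣ) → Prop
  | steinberg (x y : Kˣ) (h : (x : K) + (y : K) = 1) :
      MilnorRel T (TensorAlgebra.ι ℤ (Additive.ofMul x) * TensorAlgebra.ι ℤ (Additive.ofMul y)) 0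
  | subgroup (x : Kˣ) (h : x ∈ T) :
      MilnorRel T (TensorAlgebra.ι ℤ (Additive.ofMul x)) 0

/-- The Milnor K-theory ring modulo a subgroup: `K^M_*(K|T)`.  For `T = ⊥` this is
Milnor K-theory `K^M_*(K)` itself. -/
abbrev MilnorK (T : Subgroup Kˣ) := RingQuot (MilnorRel K T)

/-- The canonical quotient map from the tensor algebra. -/
noncomputable def milnorMk (T : Subgroup Kˣ) :
    TensorAlgebra ℤ (Additive Kˣ) →+* MilnorK K T :=
  RingQuot.mkRingHom (MilnorRel K T)

/-- The symbol `{x}` in degree one of `K^M_*(K|T)`. -/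
noncomputable def symbol (T : Subgroup Kˣ) (x : Kˣ) : MilnorK K T :=
  milnorMk K T (TensorAlgebra.ι ℤ (Additive.ofMul x))

/-- The degree `n` part of `K^M_*(K|T)`, i.e. the image of the degree `n` part of the
tensor algebra. -/
noncomputable def milnorDeg (T : Subgroup Kˣ) (n : ℕ) : AddSubgroup (MilnorK K T) :=
  AddSubgroup.map (milnorMk K T).toAddMonoidHom
    (Submodule.toAddSubgroup
      ((LinearMap.range (TensorAlgebra.ι ℤ (M := Additive Kˣ))) ^ n))

/-- A ring isomorphism between Milnor K-rings is graded if it maps each degree onto the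
corresponding degree. -/
def IsGradedMilnorIso {K L : Type} [Field K] [Field L] {T : Subgroup Kˣ} {S : Subgroup Lˣ}
    (φ : MilnorK K T ≃+* MilnorK L S) : Prop :=
  ∀ n : ℕ, AddSubgroup.map φ.toRingHom.toAddMonoidHom (milnorDeg K T n) = milnorDeg L S n

/-- `𝒦_*(K|T) := ℚ ⊗_ℤ K^M_*(K|T)`. -/
abbrev MilnorKQ (T : Subgroup Kˣ) := ℚ ⊗[ℤ] MilnorK K T

/-- The symbol `{x}` in degree one of `𝒦_*(K|T)`. -/
noncomputable def symbolQ (T : Subgroup Kˣ) (x : Kˣ) : MilnorKQ K T :=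
  1 ⊗ₜ symbol K T x

/-- The degree `n` part of `𝒦_*(K|T)`. -/
noncomputable def milnorDegQ (T : Subgroup Kˣ) (n : ℕ) : Submodule ℚ (MilnorKQ K T) :=
  Submodule.span ℚ
    ((fun a => (1 : ℚ) ⊗ₜ a) ''
      ((milnorMk K T) ''
        ((LinearMap.range (TensorAlgebra.ι ℤ (M := Additive Kˣ))) ^ n : Submodule ℤ _)))

/-- An isomorphism of the graded `ℚ`-algebras `𝒦_*(K|T)` is graded if it maps each degree
onto the corresponding degree. -/
def IsGradedIsoQ {K L : Type} [Field K] [Field L] {T : Subgroup Kˣ} {S : Subgroup Lˣ}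
    (φ : MilnorKQ K T ≃ₐ[ℚ] MilnorKQ L S) : Prop :=
  ∀ n : ℕ, Submodule.map φ.toLinearMap (milnorDegQ K T n) = milnorDegQ L S n

variable {K}

/-- The ring homomorphism `K^M_*(K|T) → K^M_*(L|S)` induced by a field embedding `σ`
with `σ(T) ⊆ S`. -/
noncomputable def milnorMap {L : Type} [Field L] (σ : K →+* L)
    (T : Subgroup Kˣ) (S : Subgroup Lˣ)
    (h : ∀ x : Kˣ, x ∈ T → Units.map (σ : K →* L) x ∈ S) :
    MilnorK K T →+* MilnorK L S :=
  RingQuot.lift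
    ⟨(TensorAlgebra.lift ℤ
        (((milnorMk L S).toAddMonoidHom.comp
          ((TensorAlgebra.ι ℤ (M := Additive Lˣ)).toAddMonoidHom.comp
            (MonoidHom.toAdditive (Units.map (σ : K →* L))))).toIntLinearMap)).toRingHom,
     by
      rintro a b (⟨x, y, hxy⟩ | ⟨x, hx⟩)
      · simp only [AlgHom.toRingHom_eq_coe, RingHom.coe_coe, map_mul, map_zero,
          TensorAlgebra.lift_ι_apply]
        show milnorMk L S (TensorAlgebra.ι ℤ (Additive.ofMul (Units.map (σ : K →* L) x))) *
          milnorMk L S (TensorAlgebra.ι ℤ (Additive.ofMul (Units.map (σ : K →* L) y))) = 0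
        rw [← map_mul]
        have hsum : ((Units.map (σ : K →* L) x : Lˣ) : L) +
            ((Units.map (σ : K →* L) y : Lˣ) : L) = 1 := by
          simpa using congrArg σ hxy
        exact (RingQuot.mkRingHom_rel
          (MilnorRel.steinberg (T := S) _ _ hsum)).trans (map_zero _)
      · simp only [AlgHom.toRingHom_eq_coe, RingHom.coe_coe, map_zero,
          TensorAlgebra.lift_ι_apply]
        show milnorMk L S (TensorAlgebra.ι ℤ (Additive.ofMul (Units.map (σ : K →* L) x))) = 0
        exact (RingQuot.mkRingHom_rel
          (MilnorRel.subgroup (T := S) _ (h x hx))).trans (map_zero _)⟩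

/-- The induced ring homomorphism `𝒦_*(K|T) → 𝒦_*(L|S)`. -/
noncomputable def milnorMapQ {L : Type} [Field L] (σ : K →+* L)
    (T : Subgroup Kˣ) (S : Subgroup Lˣ)
    (h : ∀ x : Kˣ, x ∈ T → Units.map (σ : K →* L) x ∈ S) :
    MilnorKQ K T →+* MilnorKQ L S :=
  (Algebra.TensorProduct.map (AlgHom.id ℤ ℚ) (milnorMap σ T S h).toIntAlgHom).toRingHom

end Milnor

section Dual

variable (K : Type) [Field K]

/-- `𝒢_K := Hom_ℤ(Kˣ, ℚ)`. -/
abbrev GK := Additive Kˣ →ₗ[ℤ] ℚ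

/-- The weak topology on `𝒢_K`: the topology of pointwise convergence, `ℚ` being discrete. -/
noncomputable def gkTopology : TopologicalSpace (GK K) :=
  TopologicalSpace.induced (fun (f : GK K) (x : Additive Kˣ) => f x)
    (@Pi.topologicalSpace _ _ (fun _ => ⊥))

/-- A subspace of `𝒢_K` is closed if it is closed in the weak topology. -/
def IsClosedSubspace (H : Submodule ℚ (GK K)) : Prop :=
  @IsClosed _ (gkTopology K) (H : Set (GK K))

variable {K}

/-- `f, g ∈ 𝒢_K` form an alternating pair: `ℛ_K(f,g)`. -/
def AltPair (f g : GK K) : Prop :=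
  ∀ x y : Kˣ, (x : K) + (y : K) = 1 →
    f (Additive.ofMul x) * g (Additive.ofMul y) = f (Additive.ofMul y) * g (Additive.ofMul x)

variable (K)

/-- `𝒢_{K|T}`: the functionals vanishing on `T`. -/
def GKrel (T : Subgroup Kˣ) : Submodule ℚ (GK K) where
  carrier := {f | ∀ x ∈ T, f (Additive.ofMul x) = 0}
  add_mem' := by intro f g hf hg x hx; simp [hf x hx, hg x hx]
  zero_mem' := by intro x hx; simp
  smul_mem' := by intro c f hf x hx; simp [hf x hx]

/-- The `ℛ_K`-centralizer `C_K(𝒟)` of a subspace `𝒟 ⊆ 𝒢_K`. -/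
def RCentralizer (D : Submodule ℚ (GK K)) : Submodule ℚ (GK K) where
  carrier := {f | ∀ g ∈ D, AltPair f g}
  add_mem' := by
    intro f1 f2 h1 h2 g hg x y hxy
    have e1 := h1 g hg x y hxy
    have e2 := h2 g hg x y hxy
    simp only [LinearMap.add_apply]
    rw [add_mul, add_mul, e1, e2]
  zero_mem' := by intro g hg x y hxy; simp
  smul_mem' := by
    intro c f hf g hg x y hxy
    simp only [LinearMap.smul_apply, smul_eq_mul]
    rw [mul_assoc, mul_assoc, hf g hg x y hxy]

/-- The `ℛ_K`-centre `Z_K(𝒟)` of a subspace `𝒟 ⊆ 𝒢_K`. -/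
def RCentre (D : Submodule ℚ (GK K)) : Submodule ℚ (GK K) :=
  D ⊓ RCentralizer K D

/-- The orthogonal subgroup `ℋ^⊥ ⊆ Kˣ` of a subspace `ℋ ⊆ 𝒢_K`. -/
def perpSubgroup (H : Submodule ℚ (GK K)) : Subgroup Kˣ where
  carrier := {x | ∀ f ∈ H, f (Additive.ofMul x) = 0}
  one_mem' := by
    intro f hf
    show f (Additive.ofMul 1) = 0
    rw [ofMul_one, map_zero]
  mul_mem' := by
    intro x y hx hy f hf
    have : Additive.ofMul (x * y) = Additive.ofMul x + Additive.ofMul y := rfl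
    rw [this, map_add, hx f hf, hy f hf, add_zero]
  inv_mem' := by
    intro x hx f hf
    have : Additive.ofMul x⁻¹ = -Additive.ofMul x := rfl
    rw [this, map_neg, hx f hf, neg_zero]

/-- `I_v := 𝒢_{K|U_v}` for a valuation (given by its valuation subring `A`). -/
noncomputable def Ival (A : ValuationSubring K) : Submodule ℚ (GK K) := GKrel K A.unitGroup

/-- `D_v := 𝒢_{K|U_v^1}` for a valuation (given by its valuation subring `A`). -/
def Dval (A : ValuationSubring K) : Submodule ℚ (GK K) := GKrel K A.principalUnitGroup

/-- `A` is the valuation ring of the minimal valuation `v_ℐ` attached to a valuative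
subspace `ℐ`: one has `ℐ ⊆ I_v`, and `v` is minimal with this property.  Valuations are
ordered by coarsening (`v ≤ w` iff `v` is a coarsening of `w`, i.e. `𝒪_w ⊆ 𝒪_v`), so
minimality of the valuation means maximality of the valuation subring. -/
def IsMinValuationFor (A : ValuationSubring K) (I : Submodule ℚ (GK K)) : Prop :=
  I ≤ Ival K A ∧ ∀ B : ValuationSubring K, I ≤ Ival K B → B ≤ A

/-- The subgroup of `Kˣ` consisting of the units of a subfield `k ⊆ K`. -/
def subfieldUnits (k : Subfield K) : Subgroup Kˣ where
  carrier := {x | (x : K) ∈ k}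
  one_mem' := k.one_mem
  mul_mem' := by intro a b ha hb; exact k.mul_mem ha hb
  inv_mem' := by
    intro a ha
    show ((a⁻¹ : Kˣ) : K) ∈ k
    rw [Units.val_inv_eq_inv_val]
    exact k.inv_mem ha

/-- The valuation `v` (given by its valuation subring `A`) is `T`-visible:
`I_v ∩ 𝒢_{K|T} = Z_K(D_v ∩ 𝒢_{K|T}) ≠ D_v ∩ 𝒢_{K|T}`, and `v = v_ℐ` for
`ℐ = I_v ∩ 𝒢_{K|T}`. -/
def IsVisible (T : Subgroup Kˣ) (A : ValuationSubring K) : Prop :=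
  Ival K A ⊓ GKrel K T = RCentre K (Dval K A ⊓ GKrel K T) ∧
  Ival K A ⊓ GKrel K T ≠ Dval K A ⊓ GKrel K T ∧
  IsMinValuationFor K A (Ival K A ⊓ GKrel K T)

/-- A subgroup of the value group `vK = Kˣ/U_v` of the valuation corresponding to `A` is
represented by a subgroup `H` of `Kˣ` containing `U_v = A.unitGroup`; `H/U_v` is convex in
`vK` iff whenever `x ∈ H` and `0 ≤ v(y) ≤ v(x)`, also `y ∈ H`. -/
def IsConvexInValueGroup (A : ValuationSubring K) (H : Subgroup Kˣ) : Prop :=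
  A.unitGroup ≤ H ∧
    ∀ x y : Kˣ, x ∈ H → (y : K) ∈ A → ((x : K) * (y : K)⁻¹) ∈ A → y ∈ H

/-- The residue field `kv` of the restriction of the valuation to a subfield `k ⊆ K`,
as a subfield of the residue field `Kv`; it is the set of residues of elements
of `k ∩ 𝒪_v` (which is already closed under the field operations). -/
noncomputable def residueSubfield (A : ValuationSubring K) (k : Subfield K) :
    Subfield (IsLocalRing.ResidueField A) :=
  Subfield.closure ((IsLocalRing.residue A) '' {a : A | (a : K) ∈ k})

end Dual

section KQ

variable (K : Type) [Field K]

/-- A subgroup `T ≤ Kˣ` viewed as a `ℤ`-submodule of `Additive Kˣ`. -/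
def subgroupToSubmodule (T : Subgroup Kˣ) : Submodule ℤ (Additive Kˣ) :=
  AddSubgroup.toIntSubmodule (Subgroup.toAddSubgroup T)

/-- `𝒦_{K|T} := ℚ ⊗_ℤ (Kˣ/T) = 𝒦_1(K|T)`. -/
abbrev KQ (T : Subgroup Kˣ) := ℚ ⊗[ℤ] (Additive Kˣ ⧸ subgroupToSubmodule K T)

/-- The class of `x ∈ Kˣ` in `𝒦_{K|T}`; this is the canonical map `Kˣ → 𝒦_{K|T}`. -/
noncomputable def symbQ (T : Subgroup Kˣ) (x : Kˣ) : KQ K T :=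
  (1 : ℚ) ⊗ₜ Submodule.Quotient.mk (Additive.ofMul x)

/-- The map `Kˣ → 𝒦_1(K|T)`, `x ↦ {x}`, as a `ℤ`-linear map on `Additive Kˣ`. -/
noncomputable def symbolQLinear (T : Subgroup Kˣ) : Additive Kˣ →ₗ[ℤ] MilnorKQ K T :=
  ((Algebra.TensorProduct.includeRight :
      MilnorK K T →ₐ[ℤ] MilnorKQ K T).toLinearMap.toAddMonoidHom.comp
    ((milnorMk K T).toAddMonoidHom.comp
      (TensorAlgebra.ι ℤ (M := Additive Kˣ)).toAddMonoidHom)).toIntLinearMap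

/-- The canonical identification map `𝒦_{K|T} = 𝒦_1(K|T) → 𝒦_*(K|T)` onto degree one. -/
noncomputable def KQtoMilnor (T : Subgroup Kˣ) : KQ K T →ₗ[ℚ] MilnorKQ K T :=
  LinearMap.liftBaseChange ℚ <|
    Submodule.liftQ (subgroupToSubmodule K T) (symbolQLinear K T)
      (by
        intro x hx
        have h2 := RingQuot.mkRingHom_rel (MilnorRel.subgroup (T := T) (Additive.toMul x) hx)
        simp only [LinearMap.mem_ker]
        show (Algebra.TensorProduct.includeRight : MilnorK K T →ₐ[ℤ] MilnorKQ K T)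
          (milnorMk K T (TensorAlgebra.ι ℤ x)) = 0
        rw [show milnorMk K T (TensorAlgebra.ι ℤ x) = 0 from h2.trans (map_zero _), map_zero])

/-- A subspace `ℋ ⊆ 𝒦_{K|T}` is Milnor-closed if for every nonzero `s ∈ ℋ` and every
`t ∈ 𝒦_{K|T}` with `{s,t} = 0` in `𝒦_2(K|T)`, one has `t ∈ ℋ`. -/
def MilnorClosed (T : Subgroup Kˣ) (H : Submodule ℚ (KQ K T)) : Prop :=
  ∀ s ∈ H, s ≠ 0 → ∀ t : KQ K T, KQtoMilnor K T s * KQtoMilnor K T t = 0 → t ∈ H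

/-- The projection `ℚ ⊗_ℤ Kˣ → 𝒦_{K|T}`. -/
noncomputable def KQproj (T : Subgroup Kˣ) : (ℚ ⊗[ℤ] Additive Kˣ) →ₗ[ℚ] KQ K T :=
  LinearMap.baseChange ℚ (subgroupToSubmodule K T).mkQ

lemma KQproj_surjective (T : Subgroup Kˣ) : Function.Surjective (KQproj K T) := by
  intro z
  induction z using TensorProduct.induction_on with
  | zero => exact ⟨0, map_zero _⟩
  | tmul a b =>
      obtain ⟨u, hu⟩ := Submodule.Quotient.mk_surjective (subgroupToSubmodule K T) b
      exact ⟨a ⊗ₜ u, by rw [KQproj, LinearMap.baseChange_tmul, Submodule.mkQ_apply, hu]⟩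
  | add x y hx hy =>
      obtain ⟨x', hx'⟩ := hx
      obtain ⟨y', hy'⟩ := hy
      exact ⟨x' + y', by rw [map_add, hx', hy']⟩

/-- The canonical pairing `𝒦_{K|T} × 𝒢_{K|T} → ℚ`.  It takes the correct value
`⟨s, f⟩` whenever `f` vanishes on `T` (in which case the value is independent of the
choice of preimage), and junk values otherwise. -/
noncomputable def gpair (T : Subgroup Kˣ) (f : GK K) (s : KQ K T) : ℚ :=
  (LinearMap.liftBaseChange ℚ f) (Function.surjInv (KQproj_surjective K T) s)

/-- The image of `𝒦_{L|k}` in `𝒦_{K|k}`, i.e. the subspace spanned by the classes of the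
elements of `Lˣ`. -/
noncomputable def subfieldSpan (k : Subfield K) (L : Subfield K) :
    Submodule ℚ (KQ K (subfieldUnits K k)) :=
  Submodule.span ℚ {s | ∃ x : Kˣ, (x : K) ∈ L ∧ s = symbQ K (subfieldUnits K k) x}

end KQ

section FieldTheory

variable (K : Type) [Field K]

/-- `k` is relatively algebraically closed in `K`. -/
def IsRelAlgClosed (k : Subfield K) : Prop := ∀ x : K, IsAlgebraic k x → x ∈ k

/-- The relative algebraic closure of a subfield `M` in `K` (the set of elements of `K`
algebraic over `M`, which is already a subfield). -/
def relAlgClosure (M : Subfield K) : Subfield K :=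
  Subfield.closure {x : K | IsAlgebraic M x}

/-- The transcendence degree `trdeg(L|k)` of an extension of subfields of `K`:
the supremum of the cardinalities of subsets of `L` that are algebraically independent
over `k`.  `trdeg K k ⊤` is `trdeg(K|k)`. -/
noncomputable def trdeg (k L : Subfield K) : Cardinal :=
  ⨆ s : {s : Set K // s ⊆ (L : Set K) ∧ AlgebraicIndependent k ((↑) : s → K)},
    Cardinal.mk s.1

/-- The perfect closure `k^i` of a subfield `k ⊆ K` inside a perfect closure
`iK : K → Ki` of `K` (with respect to the characteristic exponent `p`): the set of
elements with a `p`-power in `iK(k)` (already a subfield). -/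
def subPerfectClosure {Ki : Type} [Field Ki] (iK : K →+* Ki) (k : Subfield K) (p : ℕ) :
    Subfield Ki :=
  Subfield.closure {x : Ki | ∃ n : ℕ, ∃ a : K, a ∈ k ∧ x ^ p ^ n = iK a}

variable {K}

lemma subfield_units_map {L : Type} [Field L] (σ : K →+* L) (k : Subfield K)
    (l : Subfield L) (h : ∀ x ∈ k, σ x ∈ l) :
    ∀ x : Kˣ, x ∈ subfieldUnits K k → Units.map (σ : K →* L) x ∈ subfieldUnits L l :=
  fun x hx => h x hx

lemma mem_subPerfectClosure {Ki : Type} [Field Ki] (iK : K →+* Ki) (k : Subfield K)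
    (p : ℕ) : ∀ x ∈ k, iK x ∈ subPerfectClosure K iK k p :=
  fun x hx => Subfield.subset_closure ⟨0, x, hx, by simp⟩

lemma bot_units_map {L : Type} [Field L] (σ : K →+* L) (S : Subgroup Lˣ) :
    ∀ x : Kˣ, x ∈ (⊥ : Subgroup Kˣ) → Units.map (σ : K →* L) x ∈ S := by
  intro x hx
  rw [Subgroup.mem_bot] at hx
  subst hx
  rw [map_one]
  exact S.one_mem

end FieldTheory

end Paper

/-!
Put `P = ℐ^⊥`. Then `ℐ ⊆ I_v` iff `U_v ⊆ P`, so `v_ℐ` is the coarsest valuation whose unit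
group lies in `P`. The key fact is that the finest common coarsening `A ⊔ B` of two valuation
rings has unit group `U_A U_B`: this subgroup is convex for `A` (by approximation when `A` and
`B` are incomparable), and making it invertible in `A` gives a common coarsening. Hence the
valuation rings with unit group in `P` form a directed family, whose union is the greatest
one. Coarsenings of `A` correspond to convex subgroups `H ⊇ U_A`, so `A` is the greatest one
iff no convex subgroup strictly between `U_A` and `P` exists.
-/

namespace ValuationSubring

section Approximation

variable {K : Type*} [Field K] {A B : ValuationSubring K}

theorem mem_unitGroup_iff_mem_and_inv_mem (x : Kˣ) :
    x ∈ A.unitGroup ↔ (x : K) ∈ A ∧ ((x⁻¹ : Kˣ) : K) ∈ A := by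
  have hx : A.valuation x ≠ 0 := (Valuation.ne_zero_iff _).2 x.ne_zero
  rw [mem_unitGroup_iff, ← valuation_le_one_iff, ← valuation_le_one_iff,
    Units.val_inv_eq_inv_val, map_inv₀, inv_le_one₀ (zero_lt_iff.2 hx)]
  exact ⟨fun h => ⟨h.le, h.ge⟩, fun h => le_antisymm h.1 h.2⟩

theorem exists_valuation_lt_one_one_lt (hAB : ¬A ≤ B) (hBA : ¬B ≤ A) :
    ∃ x : K, A.valuation x < 1 ∧ 1 < B.valuation x := by
  obtain ⟨s, hsA, hsB⟩ := SetLike.not_le_iff_exists.mp hAB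
  obtain ⟨t, htB, htA⟩ := SetLike.not_le_iff_exists.mp hBA
  rw [← valuation_le_one_iff] at hsA hsB htA htB
  push Not at hsB htA
  have ht0 : B.valuation t ≠ 0 := (Valuation.ne_zero_iff _).2 (by rintro rfl; simp at htA)
  refine ⟨s / t, ?_, ?_⟩ <;> rw [map_div₀]
  · exact (div_lt_one₀ (one_pos.trans htA)).2 (hsA.trans_lt htA)
  · exact (one_lt_div₀ (zero_lt_iff.2 ht0)).2 (htB.trans_lt hsB)

theorem exists_valuation_lt_one_one_lt_of_valuation_le_one (hAB : ¬A ≤ B) (hBA : ¬B ≤ A)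
    {c : K} (hc : A.valuation c ≤ 1) :
    ∃ x : K, A.valuation x < 1 ∧ 1 < B.valuation x ∧ B.valuation c < B.valuation x := by
  obtain ⟨x, hvx, hwx⟩ := exists_valuation_lt_one_one_lt hAB hBA
  by_cases hwc : B.valuation c ≤ 1
  · exact ⟨x, hvx, hwx, hwc.trans_lt hwx⟩
  push Not at hwc
  refine ⟨c * x, ?_, ?_, ?_⟩ <;> rw [map_mul]
  · exact mul_lt_one_of_nonneg_of_lt_one_right hc zero_le hvx
  · exact one_lt_mul_of_lt_of_le hwc hwx.le
  · simpa using mul_lt_mul_of_pos_left hwx (one_pos.trans hwc)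

theorem exists_valuation_eq_one_valuation_eq_of_not_le (hAB : ¬A ≤ B) (hBA : ¬B ≤ A)
    {y b : K} (hy0 : y ≠ 0) (hy : A.valuation y ≤ 1) (hb : B.valuation b = 1)
    (hby : A.valuation b ≤ A.valuation y) :
    ∃ b' : K, B.valuation b' = 1 ∧ A.valuation b' = A.valuation y := by
  obtain ⟨x, hvx, hwx, hwyx⟩ := exists_valuation_lt_one_one_lt_of_valuation_le_one hAB hBA hy
  have hvy : 0 < A.valuation y := zero_lt_iff.2 ((Valuation.ne_zero_iff _).2 hy0)
  have hvbx : A.valuation (b * x) < A.valuation y := by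
    rw [map_mul]
    exact (mul_le_mul_left hby _).trans_lt (mul_lt_of_lt_one_right hvy hvx)
  have hwbx : B.valuation (b * x) = B.valuation x := by rw [map_mul, hb, one_mul]
  have hwx0 : B.valuation x ≠ 0 := (one_pos.trans hwx).ne'
  -- `(y + b x) / (1 + x)` is `v`-close to `y`, since `v x < 1`, and `w`-close to `b`,
  -- since `w x` exceeds both `1` and `w y`.
  refine ⟨(y + b * x) / (1 + x), ?_, ?_⟩ <;> rw [map_div₀]
  · rw [Valuation.map_add_eq_of_lt_right _ (hwbx ▸ hwyx), hwbx,
      Valuation.map_add_eq_of_lt_right _ ((map_one B.valuation).symm ▸ hwx), div_self hwx0]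
  · rw [Valuation.map_add_eq_of_lt_left _ hvbx,
      Valuation.map_add_eq_of_lt_left _ ((map_one A.valuation).symm ▸ hvx), map_one, div_one]

theorem exists_mem_unitGroup_valuation_eq {y b : Kˣ} (hy : A.valuation y ≤ 1)
    (hb : b ∈ B.unitGroup) (hby : A.valuation b ≤ A.valuation y) :
    ∃ b' ∈ B.unitGroup, A.valuation b' = A.valuation y := by
  by_cases hBA : B ≤ A
  · have hvb : A.valuation b = 1 := unitGroup_le_unitGroup.2 hBA hb
    exact ⟨b, hb, le_antisymm hby (hy.trans hvb.ge)⟩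
  by_cases hAB : A ≤ B
  · refine ⟨y, ?_, rfl⟩
    have hmono := monotone_mapOfLE A B hAB
    have hwb : B.valuation b = 1 := hb
    rw [mem_unitGroup_iff, ← mapOfLE_valuation_apply A B hAB]
    refine le_antisymm ((hmono hy).trans (map_one _).le) ?_
    rw [← hwb, ← mapOfLE_valuation_apply A B hAB]
    exact hmono hby
  obtain ⟨b', hwb', hvb'⟩ := exists_valuation_eq_one_valuation_eq_of_not_le hAB hBA y.ne_zero hy
    hb hby
  have hb'0 : b' ≠ 0 := by rintro rfl; simp at hwb'
  exact ⟨Units.mk0 b' hb'0, hwb', hvb'⟩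

end Approximation

section Coarsening

variable {K : Type*} [Field K] (A : ValuationSubring K) (H : Subgroup Kˣ)

/-- The coarsening of `A` obtained by making the elements of `H` invertible. When `H` is a
convex subgroup of the value group, this is the coarsening of `v` with value group `vK / H`. -/
def coarsen : ValuationSubring K where
  carrier := {z : K | ∃ h ∈ H, (h : K) ∈ A ∧ z * h ∈ A}
  one_mem' := ⟨1, H.one_mem, by simp, by simp⟩
  zero_mem' := ⟨1, H.one_mem, by simp, by simp⟩
  mul_mem' := by
    rintro a b ⟨h₁, hh₁, hh₁A, ha⟩ ⟨h₂, hh₂, hh₂A, hb⟩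
    refine ⟨h₁ * h₂, H.mul_mem hh₁ hh₂, ?_, ?_⟩
    · rw [Units.val_mul]; exact A.mul_mem _ _ hh₁A hh₂A
    · rw [Units.val_mul, show a * b * ((h₁ : K) * h₂) = (a * h₁) * (b * h₂) by ring]
      exact A.mul_mem _ _ ha hb
  add_mem' := by
    rintro a b ⟨h₁, hh₁, hh₁A, ha⟩ ⟨h₂, hh₂, hh₂A, hb⟩
    refine ⟨h₁ * h₂, H.mul_mem hh₁ hh₂, ?_, ?_⟩
    · rw [Units.val_mul]; exact A.mul_mem _ _ hh₁A hh₂A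
    · rw [Units.val_mul, show (a + b) * ((h₁ : K) * h₂) = (a * h₁) * h₂ + (b * h₂) * h₁ by ring]
      exact A.add_mem _ _ (A.mul_mem _ _ ha hh₂A) (A.mul_mem _ _ hb hh₁A)
  neg_mem' := by
    rintro a ⟨h, hh, hhA, ha⟩
    exact ⟨h, hh, hhA, by rw [neg_mul]; exact A.neg_mem _ ha⟩
  mem_or_inv_mem' z :=
    (A.mem_or_inv_mem z).imp
      (fun hz => ⟨1, H.one_mem, by simp, by simpa using hz⟩)
      (fun hz => ⟨1, H.one_mem, by simp, by simpa using hz⟩)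

theorem le_coarsen : A ≤ A.coarsen H :=
  fun z hz => ⟨1, H.one_mem, by simp, by simpa using hz⟩

theorem le_unitGroup_coarsen : H ≤ (A.coarsen H).unitGroup := by
  intro h hh
  rw [mem_unitGroup_iff_mem_and_inv_mem, Units.val_inv_eq_inv_val]
  rcases A.mem_or_inv_mem (h : K) with hA | hA
  · exact ⟨A.le_coarsen H hA, h, hh, hA, by rw [inv_mul_cancel₀ h.ne_zero]; exact A.one_mem⟩
  · refine ⟨⟨h⁻¹, H.inv_mem hh, ?_, ?_⟩, A.le_coarsen H hA⟩
    · rwa [Units.val_inv_eq_inv_val]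
    · rw [Units.val_inv_eq_inv_val, mul_inv_cancel₀ h.ne_zero]; exact A.one_mem

end Coarsening

section ConvexSubgroups

open Paper

variable {K : Type} [Field K] {A : ValuationSubring K} {H : Subgroup Kˣ}

theorem unitGroup_coarsen (hH : IsConvexInValueGroup K A H) : (A.coarsen H).unitGroup = H := by
  refine le_antisymm (fun x hx => ?_) (A.le_unitGroup_coarsen H)
  rw [mem_unitGroup_iff_mem_and_inv_mem] at hx
  obtain ⟨⟨h, hh, hhA, hxh⟩, ⟨h', hh', hh'A, hxh'⟩⟩ := hx
  -- `x h` lies between `1` and `h h'` in the value group, and `h h' ∈ H`.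
  have hxhH : x * h ∈ H := by
    refine hH.2 (h * h') (x * h) (H.mul_mem hh hh') (by rwa [Units.val_mul]) ?_
    convert hxh' using 1
    simp only [Units.val_mul, Units.val_inv_eq_inv_val]
    field_simp
  simpa using H.mul_mem hxhH (H.inv_mem hh)

theorem isConvexInValueGroup_unitGroup_sup (A B : ValuationSubring K) :
    IsConvexInValueGroup K A (A.unitGroup ⊔ B.unitGroup) := by
  refine ⟨le_sup_left, fun x y hx hyA hxy => ?_⟩
  obtain ⟨a, ha, b, hb, rfl⟩ := Subgroup.mem_sup.1 hx
  rw [← valuation_le_one_iff] at hyA hxy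
  have hvy : A.valuation y ≠ 0 := (Valuation.ne_zero_iff _).2 y.ne_zero
  have hby : A.valuation b ≤ A.valuation y := by
    rwa [Units.val_mul, map_mul, map_mul, map_inv₀, (mem_unitGroup_iff A a).1 ha, one_mul,
      mul_inv_le_iff₀ (zero_lt_iff.2 hvy), one_mul] at hxy
  obtain ⟨b', hb', hvb'⟩ := exists_mem_unitGroup_valuation_eq hyA hb hby
  have hyb' : y * b'⁻¹ ∈ A.unitGroup := by
    rw [mem_unitGroup_iff, Units.val_mul, map_mul, Units.val_inv_eq_inv_val, map_inv₀, hvb',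
      mul_inv_cancel₀ hvy]
  simpa using Subgroup.mul_mem_sup hyb' hb'

theorem unitGroup_sup (A B : ValuationSubring K) :
    (A ⊔ B).unitGroup = A.unitGroup ⊔ B.unitGroup := by
  refine le_antisymm ?_ (sup_le (unitGroup_le_unitGroup.2 le_sup_left)
    (unitGroup_le_unitGroup.2 le_sup_right))
  have hC := unitGroup_coarsen (isConvexInValueGroup_unitGroup_sup A B)
  have hB : B ≤ A.coarsen (A.unitGroup ⊔ B.unitGroup) :=
    unitGroup_le_unitGroup.1 (le_sup_right.trans hC.ge)
  exact (unitGroup_le_unitGroup.2 (sup_le (A.le_coarsen _) hB)).trans hC.le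

end ConvexSubgroups

end ValuationSubring

namespace Paper

open ValuationSubring

variable {K : Type} [Field K]

theorem le_GKrel_iff {H : Submodule ℚ (GK K)} {T : Subgroup Kˣ} :
    H ≤ GKrel K T ↔ T ≤ perpSubgroup K H :=
  ⟨fun h _ hx _ hf => h hf _ hx, fun h _ hf _ hx => h hx _ hf⟩

theorem exists_isGreatest_unitGroup_le {P : Subgroup Kˣ}
    (h : ∃ B : ValuationSubring K, B.unitGroup ≤ P) :
    ∃ A, IsGreatest {B : ValuationSubring K | B.unitGroup ≤ P} A := by
  obtain ⟨B₀, hB₀⟩ := h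
  let S := {B : ValuationSubring K | B.unitGroup ≤ P}
  have : Nonempty S := ⟨⟨B₀, hB₀⟩⟩
  have hdir : Directed (· ≤ ·) (fun B : S => B.1.toSubring) := fun B C =>
    ⟨⟨B.1 ⊔ C.1, (unitGroup_sup B.1 C.1).trans_le (sup_le B.2 C.2)⟩,
      le_sup_left (a := B.1), le_sup_right (a := B.1)⟩
  let M := ofLE B₀ (⨆ B : S, B.1.toSubring) (le_iSup (fun B : S => B.1.toSubring) ⟨B₀, hB₀⟩)
  have hM : ∀ z : K, z ∈ M ↔ ∃ B : S, z ∈ B.1 := fun z => Subring.mem_iSup_of_directed hdir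
  refine ⟨M, fun u hu => ?_, fun B hB z hz => (hM z).2 ⟨⟨B, hB⟩, hz⟩⟩
  obtain ⟨hu₁, hu₂⟩ := (mem_unitGroup_iff_mem_and_inv_mem u).1 hu
  obtain ⟨B₁, hB₁⟩ := (hM _).1 hu₁
  obtain ⟨B₂, hB₂⟩ := (hM _).1 hu₂
  obtain ⟨C, hC₁, hC₂⟩ := hdir B₁ B₂
  exact C.2 ((mem_unitGroup_iff_mem_and_inv_mem u).2 ⟨hC₁ hB₁, hC₂ hB₂⟩)

theorem isGreatest_unitGroup_le_iff {P : Subgroup Kˣ} {A : ValuationSubring K} :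
    IsGreatest {B : ValuationSubring K | B.unitGroup ≤ P} A ↔
      A.unitGroup ≤ P ∧
        ∀ H : Subgroup Kˣ, IsConvexInValueGroup K A H → H ≤ P → H = A.unitGroup := by
  refine ⟨fun ⟨hA, hmax⟩ => ⟨hA, fun H hH hHP => ?_⟩, fun ⟨hA, hconv⟩ => ⟨hA, fun B hB => ?_⟩⟩
  · have hle : A.coarsen H ≤ A := hmax ((unitGroup_coarsen hH).trans_le hHP)
    exact le_antisymm ((unitGroup_coarsen hH).ge.trans (unitGroup_le_unitGroup.2 hle)) hH.1
  · have hsup := hconv _ (isConvexInValueGroup_unitGroup_sup A B) (sup_le hA hB)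
    exact unitGroup_le_unitGroup.1 (le_sup_right.trans hsup.le)

theorem min_valuation_exists_unique_general (K : Type) [Field K] (I : Submodule ℚ (GK K))
    (hval : ∃ B : ValuationSubring K, I ≤ Ival K B) :
    (∃! A : ValuationSubring K, IsMinValuationFor K A I) ∧
    (∀ A : ValuationSubring K, IsMinValuationFor K A I ↔
      ((I ≤ Ival K A ∧ A.unitGroup ≤ perpSubgroup K I) ∧
        ∀ H : Subgroup Kˣ, IsConvexInValueGroup K A H →
          H ≤ A.unitGroup ⊔ perpSubgroup K I → H = A.unitGroup)) := by
  simp only [Ival, le_GKrel_iff] at hval ⊢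
  have hmin : ∀ A, IsMinValuationFor K A I ↔
      IsGreatest {B : ValuationSubring K | B.unitGroup ≤ perpSubgroup K I} A := fun A => by
    simp only [IsMinValuationFor, Ival, le_GKrel_iff]; rfl
  simp only [hmin]
  refine ⟨?_, fun A => ?_⟩
  · obtain ⟨A, hA⟩ := exists_isGreatest_unitGroup_le hval
    exact ⟨A, hA, fun B hB => hB.unique hA⟩
  · rw [isGreatest_unitGroup_le_iff, and_self]
    refine and_congr_right fun hA => ?_
    rw [sup_eq_right.2 hA]

/-- A valuative closed subspace `ℐ ⊆ 𝒢_K` has a unique minimal (with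
respect to coarsening) valuation `v_ℐ` with `ℐ ⊆ I_{v_ℐ}`, and `v = v_ℐ` iff
(1) `ℐ ⊆ I_v` (equivalently `U_v ⊆ ℐ^⊥`) and (2) `v(ℐ^⊥)` contains no nontrivial
convex subgroups of the value group `vK`. -/
theorem min_valuation_exists_unique (K : Type) [Field K] (I : Submodule ℚ (GK K))
    (hcl : IsClosedSubspace K I) (hval : ∃ B : ValuationSubring K, I ≤ Ival K B) :
    (∃! A : ValuationSubring K, IsMinValuationFor K A I) ∧
    (∀ A : ValuationSubring K, IsMinValuationFor K A I ↔
      ((I ≤ Ival K A ∧ A.unitGroup ≤ perpSubgroup K I) ∧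
        ∀ H : Subgroup Kˣ, IsConvexInValueGroup K A H →
          H ≤ A.unitGroup ⊔ perpSubgroup K I → H = A.unitGroup)) :=
  min_valuation_exists_unique_general K I hval

end Paper
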